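/- arXiv:1205.3634 — 2 statements merged into one kernel-verified Lean document; each statement's English description precedes it below -/
import Mathlib

section
/- Let f be an R-closed homeomorphism of a compact metrizable space X. If U is an open set that is a union of orbit closures (a saturated open set) containing a minimal set L, then there exists ε > 0 such that the open ε-neighborhood V of L is contained in U, and the saturation Sat(V) = ⋃_{k ∈ Z} f^k(V) is an open, f-invariant, arcwise connected (if V is arcwise connected and L ⊆ f^k(V) for all k) subset of U. -/
open Topology Filter Set

/-- The ℤ-orbit of a point under a bijection. -/
def orbitE {X : Type*} (e : Equiv.Perm X) (x : X) : Set X :=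
  Set.range fun n : ℤ => (e ^ n) x

/-- A homeomorphism is R-closed if the orbit-closure relation is closed. -/
def RClosed {X : Type*} [TopologicalSpace X] (f : X ≃ₜ X) : Prop :=
  IsClosed {p : X × X | p.2 ∈ closure (orbitE f.toEquiv p.1)}

/-- A minimal set for a bijection of a topological space. -/
def IsMinimalSet {X : Type*} [TopologicalSpace X] (e : Equiv.Perm X) (M : Set X) : Prop :=
  M.Nonempty ∧ IsClosed M ∧ e '' M = M ∧ ∀ x ∈ M, closure (orbitE e x) = M

theorem IsPathConnected.iUnion_of_forall_mem {X ι : Type*} [TopologicalSpace X] [Nonempty ι]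
    {s : ι → Set X} {x : X} (hs : ∀ i, IsPathConnected (s i)) (hx : ∀ i, x ∈ s i) :
    IsPathConnected (⋃ i, s i) := by
  refine ⟨x, mem_iUnion.2 ⟨Classical.arbitrary ι, hx _⟩, fun {y} hy => ?_⟩
  obtain ⟨i, hyi⟩ := mem_iUnion.1 hy
  exact ((hs i).joinedIn x (hx i) y hyi).mono (subset_iUnion s i)

namespace Equiv.Perm

variable {α : Type*}

theorem image_iUnion_zpow_image (e : Equiv.Perm α) (s : Set α) :
    e '' ⋃ k : ℤ, (e ^ k) '' s = ⋃ k : ℤ, (e ^ k) '' s := by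
  simp only [image_iUnion, image_image, ← Equiv.Perm.mul_apply, ← zpow_one_add]
  exact (Equiv.addLeft (1 : ℤ)).surjective.iUnion_comp fun k => (e ^ k) '' s

theorem iUnion_zpow_image_subset {e : Equiv.Perm α} {s U : Set α}
    (hU : ∀ x ∈ U, orbitE e x ⊆ U) (hs : s ⊆ U) : ⋃ k : ℤ, (e ^ k) '' s ⊆ U :=
  iUnion_subset fun k => image_subset_iff.2 fun x hx => hU x (hs hx) ⟨k, rfl⟩

end Equiv.Perm

namespace Homeomorph

variable {X : Type*} [TopologicalSpace X]

theorem coe_toEquiv_zpow (f : X ≃ₜ X) (k : ℤ) : ⇑(f.toEquiv ^ k) = ⇑(f ^ k) :=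
  congrArg DFunLike.coe
    (map_zpow (MonoidHom.mk' (toEquiv : (X ≃ₜ X) → Equiv.Perm X) fun _ _ => rfl) f k).symm

theorem isOpen_iUnion_zpow_image (f : X ≃ₜ X) {s : Set X} (hs : IsOpen s) :
    IsOpen (⋃ k : ℤ, (f.toEquiv ^ k) '' s) :=
  isOpen_iUnion fun k => by
    rw [coe_toEquiv_zpow]
    exact (f ^ k).isOpenMap s hs

theorem isPathConnected_iUnion_zpow_image (f : X ≃ₜ X) {s : Set X} {x : X}
    (hs : IsPathConnected s) (hx : ∀ k : ℤ, x ∈ (f.toEquiv ^ k) '' s) :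
    IsPathConnected (⋃ k : ℤ, (f.toEquiv ^ k) '' s) :=
  IsPathConnected.iUnion_of_forall_mem (fun k => by
    rw [coe_toEquiv_zpow]
    exact hs.image (f ^ k).continuous) hx

end Homeomorph

theorem stmt_10_general {X : Type*} [MetricSpace X] [CompactSpace X]
    (f : X ≃ₜ X)
    (U : Set X) (hUopen : IsOpen U)
    (hUsat : ∀ x ∈ U, closure (orbitE f.toEquiv x) ⊆ U)
    (L : Set X) (hL : IsMinimalSet f.toEquiv L) (hLU : L ⊆ U) :
    ∃ ε > (0 : ℝ), Metric.thickening ε L ⊆ U ∧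
      IsOpen (⋃ k : ℤ, (f.toEquiv ^ k) '' Metric.thickening ε L) ∧
      f.toEquiv '' (⋃ k : ℤ, (f.toEquiv ^ k) '' Metric.thickening ε L)
        = ⋃ k : ℤ, (f.toEquiv ^ k) '' Metric.thickening ε L ∧
      (⋃ k : ℤ, (f.toEquiv ^ k) '' Metric.thickening ε L) ⊆ U ∧
      ((IsPathConnected (Metric.thickening ε L) ∧
          ∀ k : ℤ, L ⊆ (f.toEquiv ^ k) '' Metric.thickening ε L) →
        IsPathConnected (⋃ k : ℤ, (f.toEquiv ^ k) '' Metric.thickening ε L)) := by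
  obtain ⟨ε, hε, hVU⟩ := hL.2.1.isCompact.exists_thickening_subset_open hUopen hLU
  refine ⟨ε, hε, hVU, f.isOpen_iUnion_zpow_image Metric.isOpen_thickening,
    Equiv.Perm.image_iUnion_zpow_image f.toEquiv _,
    Equiv.Perm.iUnion_zpow_image_subset (fun x hx => subset_closure.trans (hUsat x hx)) hVU, ?_⟩
  rintro ⟨hV, hLV⟩
  obtain ⟨x, hx⟩ := hL.1
  exact f.isPathConnected_iUnion_zpow_image hV fun k => hLV k hx

theorem stmt_10 {X : Type*} [MetricSpace X] [CompactSpace X]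
    (f : X ≃ₜ X) (hf : RClosed f)
    (U : Set X) (hUopen : IsOpen U)
    (hUsat : ∀ x ∈ U, closure (orbitE f.toEquiv x) ⊆ U)
    (L : Set X) (hL : IsMinimalSet f.toEquiv L) (hLU : L ⊆ U) :
    ∃ ε > (0 : ℝ), Metric.thickening ε L ⊆ U ∧
      IsOpen (⋃ k : ℤ, (f.toEquiv ^ k) '' Metric.thickening ε L) ∧
      f.toEquiv '' (⋃ k : ℤ, (f.toEquiv ^ k) '' Metric.thickening ε L)
        = ⋃ k : ℤ, (f.toEquiv ^ k) '' Metric.thickening ε L ∧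
      (⋃ k : ℤ, (f.toEquiv ^ k) '' Metric.thickening ε L) ⊆ U ∧
      ((IsPathConnected (Metric.thickening ε L) ∧
          ∀ k : ℤ, L ⊆ (f.toEquiv ^ k) '' Metric.thickening ε L) →
        IsPathConnected (⋃ k : ℤ, (f.toEquiv ^ k) '' Metric.thickening ε L)) :=
  stmt_10_general f U hUopen hUsat L hL hLU
end

section
/- Let f be an R-closed homeomorphism of a compact metrizable space X that is not minimal, and let V be the set of points x outside Fix(f) whose orbit closure is connected. Then every point in the boundary closure(V) − V is a fixed point of f. -/
open Topology Filter Set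

/-!
Having a connected orbit closure is a closed condition for an R-closed homeomorphism `f` of a
compact Hausdorff space. Closedness of the orbit-closure relation makes `y ↦ closure (O y)`
upper semicontinuous. So if `x` is a limit of points with connected orbit closures and
`closure (O x)` lies in the union of disjoint open sets `U ∋ x` and `W`, then nearby
connected orbit closures meeting `U` lie in `U`, and passing to the limit along each `f ^ n`
gives `closure (O x) ⊆ closure U`, which misses `W`. Hence a point of `closure V \ V` has a
connected orbit closure and can only fail to be in `V` by being fixed.
-/

namespace Homeomorph

variable {X : Type*} [TopologicalSpace X]

def toPermHom : (X ≃ₜ X) →* Equiv.Perm X where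
  toFun := Homeomorph.toEquiv
  map_one' := rfl
  map_mul' _ _ := rfl

theorem continuous_toEquiv_zpow (f : X ≃ₜ X) (n : ℤ) : Continuous ⇑(f.toEquiv ^ n) := by
  have h : f.toEquiv ^ n = (f ^ n).toEquiv := (map_zpow toPermHom f n).symm
  rw [h]
  exact (f ^ n).continuous

end Homeomorph

theorem self_mem_orbitE {X : Type*} (e : Equiv.Perm X) (x : X) : x ∈ orbitE e x := ⟨0, rfl⟩

namespace RClosed

variable {X : Type*} [TopologicalSpace X] {f : X ≃ₜ X}

theorem isOpen_setOf_closure_orbitE_subset [CompactSpace X] (hf : RClosed f) {O : Set X}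
    (hO : IsOpen O) : IsOpen {y | closure (orbitE f.toEquiv y) ⊆ O} := by
  have hcompl : {y | closure (orbitE f.toEquiv y) ⊆ O}ᶜ =
      Prod.fst '' ({p : X × X | p.2 ∈ closure (orbitE f.toEquiv p.1)} ∩ Prod.snd ⁻¹' Oᶜ) := by
    ext y
    simp [not_subset]
  rw [← isClosed_compl_iff, hcompl]
  exact isClosedMap_fst_of_compactSpace _ (hf.inter (hO.isClosed_compl.preimage continuous_snd))

theorem closure_orbitE_subset_of_mem_closure [CompactSpace X] (hf : RClosed f) {x : X}
    (hx : x ∈ closure {y | IsPreconnected (closure (orbitE f.toEquiv y))})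
    {U W : Set X} (hU : IsOpen U) (hW : IsOpen W) (hUW : Disjoint U W)
    (hxUW : closure (orbitE f.toEquiv x) ⊆ U ∪ W) (hxU : x ∈ U) :
    closure (orbitE f.toEquiv x) ⊆ U := by
  set N := {y | closure (orbitE f.toEquiv y) ⊆ U ∪ W} ∩ U
  have hN : IsOpen N := (hf.isOpen_setOf_closure_orbitE_subset (hU.union hW)).inter hU
  have hx' : x ∈ closure (N ∩ {y | IsPreconnected (closure (orbitE f.toEquiv y))}) :=
    hN.inter_closure ⟨⟨hxUW, hxU⟩, hx⟩
  have horbit_subset : ∀ y ∈ N ∩ {y | IsPreconnected (closure (orbitE f.toEquiv y))},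
      orbitE f.toEquiv y ⊆ U := fun y ⟨⟨hyUW, hyU⟩, hy⟩ =>
    subset_closure.trans <| hy.subset_left_of_subset_union hU hW hUW hyUW
      ⟨y, subset_closure (self_mem_orbitE _ y), hyU⟩
  have horbit : orbitE f.toEquiv x ⊆ closure U := by
    rintro - ⟨n, rfl⟩
    exact map_mem_closure (f.continuous_toEquiv_zpow n) hx'
      fun y hy => horbit_subset y hy ⟨n, rfl⟩
  intro z hz
  have hzU := closure_minimal horbit isClosed_closure hz
  exact (hxUW hz).resolve_right fun hzW => (hUW.closure_left hW).le_bot ⟨hzU, hzW⟩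

theorem isClosed_setOf_isPreconnected_closure_orbitE [CompactSpace X] [T2Space X]
    (hf : RClosed f) : IsClosed {y | IsPreconnected (closure (orbitE f.toEquiv y))} := by
  refine closure_subset_iff_isClosed.mp fun x hx => ?_
  rw [mem_ofPred_eq, isPreconnected_iff_subset_of_fully_disjoint_closed isClosed_closure]
  intro A B hA hB hAB hdisj
  obtain ⟨U, W, hU, hW, hAU, hBW, hUW⟩ := normal_separation hA hB hdisj
  have hUW' : closure (orbitE f.toEquiv x) ⊆ U ∪ W := hAB.trans (union_subset_union hAU hBW)
  have hsub_A : closure (orbitE f.toEquiv x) ⊆ U → closure (orbitE f.toEquiv x) ⊆ A :=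
    fun h z hz => (hAB hz).resolve_right fun hzB => hUW.le_bot ⟨h hz, hBW hzB⟩
  have hsub_B : closure (orbitE f.toEquiv x) ⊆ W → closure (orbitE f.toEquiv x) ⊆ B :=
    fun h z hz => (hAB hz).resolve_left fun hzA => hUW.le_bot ⟨hAU hzA, h hz⟩
  rcases hAB (subset_closure (self_mem_orbitE _ x)) with hxA | hxB
  · exact .inl <| hsub_A <| hf.closure_orbitE_subset_of_mem_closure hx hU hW hUW hUW' (hAU hxA)
  · exact .inr <| hsub_B <| hf.closure_orbitE_subset_of_mem_closure hx hW hU hUW.symm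
      (by rwa [union_comm]) (hBW hxB)

end RClosed

theorem stmt_19_general {X : Type*} [TopologicalSpace X] [CompactSpace X]
    [TopologicalSpace.MetrizableSpace X] (f : X ≃ₜ X) (hf : RClosed f) :
    ∀ x ∈ closure {y : X | f y ≠ y ∧ IsConnected (closure (orbitE f.toEquiv y))} \
        {y : X | f y ≠ y ∧ IsConnected (closure (orbitE f.toEquiv y))},
      f x = x := by
  rintro x ⟨hx, hxV⟩
  by_contra hfx
  have hpre : IsPreconnected (closure (orbitE f.toEquiv x)) :=
    closure_minimal (fun y hy => hy.2.isPreconnected)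
      hf.isClosed_setOf_isPreconnected_closure_orbitE hx
  exact hxV ⟨hfx, ⟨x, subset_closure (self_mem_orbitE _ x)⟩, hpre⟩

theorem stmt_19 {X : Type*} [TopologicalSpace X] [CompactSpace X]
    [TopologicalSpace.MetrizableSpace X] (f : X ≃ₜ X) (hf : RClosed f)
    (hnm : ∃ x : X, closure (orbitE f.toEquiv x) ≠ Set.univ) :
    ∀ x ∈ closure {y : X | f y ≠ y ∧ IsConnected (closure (orbitE f.toEquiv y))} \
        {y : X | f y ≠ y ∧ IsConnected (closure (orbitE f.toEquiv y))},
      f x = x :=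
  stmt_19_general f hf
end
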